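/- arXiv:1512.03199 — 3 statements merged into one kernel-verified Lean document; each statement's English description precedes it below -/
import Mathlib

section
/- Let G = (V,E) be a finite self-loopless directed graph and I ⊆ V. Then I fills V if and only if A(G) ⊆ I and I intersects every cycle of G. -/
/-!
A vertex enters the closure only once all its in-neighbours are in, so a source never enters
unless it starts in `I`, and a cycle avoiding `I` never enters: its vertices always have an
in-neighbour in the cycle itself. Conversely, on a finite graph the closure stabilises at some
`S` with `Dtm S ⊆ S`; every vertex outside `S` then has an in-neighbour outside `S`, and following
in-neighbours backwards inside `Sᶜ` must eventually repeat a vertex, producing a cycle that avoids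
`I` unless `Sᶜ` is empty.
-/

/-- Incoming vertices of `v` w.r.t. edge relation `E`. -/
def inSet {V : Type*} (E : V → V → Prop) (v : V) : Set V := {w | E w v}

/-- Vertices (completely) determined by `S`. -/
def Dtm {V : Type*} (E : V → V → Prop) (S : Set V) : Set V :=
  {v | (inSet E v).Nonempty ∧ inSet E v ⊆ S}

/-- Iterated determination closure. -/
def dcl {V : Type*} (E : V → V → Prop) (I : Set V) : ℕ → Set V
  | 0 => I
  | n + 1 => dcl E I n ∪ Dtm E (dcl E I n)

/-- `I` fills the vertex set. -/
def Fills {V : Type*} (E : V → V → Prop) (I : Set V) : Prop :=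
  ∃ n, dcl E I n = Set.univ

/-- `C` is (the vertex image of) a directed closed walk of positive length. -/
def IsCycle {V : Type*} (E : V → V → Prop) (C : Set V) : Prop :=
  ∃ (n : ℕ) (p : ℕ → V), 1 ≤ n ∧ p 0 = p n ∧ (∀ k < n, E (p k) (p (k + 1))) ∧
    C = p '' {k | k ≤ n}

open Set

section Filling

variable {V : Type*} {E : V → V → Prop} {I : Set V}

theorem monotone_dcl : Monotone (dcl E I) :=
  monotone_nat_of_le_succ fun _ => subset_union_left

theorem subset_dcl (n : ℕ) : I ⊆ dcl E I n :=
  monotone_dcl (Nat.zero_le n)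

theorem mem_of_mem_dcl_of_inSet_eq_empty {v : V} (hv : inSet E v = ∅) :
    ∀ {n}, v ∈ dcl E I n → v ∈ I
  | 0, h => h
  | _ + 1, .inl h => mem_of_mem_dcl_of_inSet_eq_empty hv h
  | _ + 1, .inr h => absurd h.1 (hv ▸ not_nonempty_empty)

theorem disjoint_dcl_of_forall_exists_pred {S : Set V} (hS : ∀ v ∈ S, ∃ w ∈ S, E w v)
    (hSI : Disjoint S I) : ∀ n, Disjoint S (dcl E I n)
  | 0 => hSI
  | n + 1 => by
    refine disjoint_union_right.2 ⟨disjoint_dcl_of_forall_exists_pred hS hSI n, ?_⟩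
    refine disjoint_left.2 fun v hvS hvD => ?_
    obtain ⟨w, hwS, hwv⟩ := hS v hvS
    exact disjoint_left.1 (disjoint_dcl_of_forall_exists_pred hS hSI n) hwS (hvD.2 hwv)

theorem exists_dtm_dcl_subset [Finite V] : ∃ N, Dtm E (dcl E I N) ⊆ dcl E I N := by
  obtain ⟨N, hN⟩ := WellFoundedGT.monotone_chain_condition ⟨dcl E I, monotone_dcl⟩
  have hstable : dcl E I N = dcl E I (N + 1) := hN (N + 1) N.le_succ
  exact ⟨N, subset_union_right.trans hstable.ge⟩

theorem exists_pred_notMem_of_dtm_subset {S : Set V} (hsrc : {v | inSet E v = ∅} ⊆ S)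
    (hS : Dtm E S ⊆ S) {v : V} (hv : v ∉ S) : ∃ w ∉ S, E w v := by
  by_contra! h
  have hne : (inSet E v).Nonempty := nonempty_iff_ne_empty.2 fun h' => hv (hsrc h')
  exact hv (hS ⟨hne, fun w hw => by_contra fun hwS => h w hwS hw⟩)

namespace IsCycle

variable {C : Set V}

theorem nonempty (hC : IsCycle E C) : C.Nonempty := by
  obtain ⟨n, p, -, -, -, rfl⟩ := hC
  exact ⟨p 0, 0, Nat.zero_le n, rfl⟩

theorem exists_pred (hC : IsCycle E C) : ∀ v ∈ C, ∃ w ∈ C, E w v := by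
  obtain ⟨n, p, hn, h0, hE, rfl⟩ := hC
  rintro _ ⟨k, hk, rfl⟩
  -- the predecessor of `p 0` is `p (n - 1)`, since the walk closes up at `p n = p 0`
  obtain ⟨j, hj, hjk⟩ : ∃ j < n, p (j + 1) = p k := by
    rcases k with _ | k
    · exact ⟨n - 1, by omega, by rw [h0, Nat.sub_add_cancel hn]⟩
    · exact ⟨k, hk, rfl⟩
  exact ⟨p j, ⟨j, hj.le, rfl⟩, hjk ▸ hE j hj⟩

end IsCycle

theorem exists_isCycle_subset_of_forall_exists_pred [Finite V] {S : Set V} (hne : S.Nonempty)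
    (hS : ∀ v ∈ S, ∃ w ∈ S, E w v) : ∃ C, IsCycle E C ∧ C ⊆ S := by
  choose g hgS hg using hS
  let f : S → S := fun v => ⟨g v v.2, hgS v v.2⟩
  obtain ⟨x, hx⟩ := hne
  obtain ⟨i, j, hij, heq⟩ := Finite.exists_ne_map_eq_of_infinite fun k : ℕ => f^[k] ⟨x, hx⟩
  wlog hlt : i < j generalizing i j
  · exact this j i hij.symm heq.symm (by omega)
  -- `y` is a periodic point of `f` with period `j - i`; walking backwards along `f` closes a cycle
  set y := f^[i] ⟨x, hx⟩
  have hy : f^[j - i] y = y := by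
    rw [← Function.iterate_add_apply, Nat.sub_add_cancel hlt.le, heq]
  refine ⟨(fun k => (f^[j - i - k] y : V)) '' {k | k ≤ j - i},
    ⟨j - i, _, by omega, by simp [hy], fun k hk => ?_, rfl⟩, ?_⟩
  · rw [show j - i - k = (j - i - (k + 1)) + 1 by omega, Function.iterate_succ_apply']
    exact hg _ _
  · rintro _ ⟨k, -, rfl⟩
    exact (f^[j - i - k] y).2

end Filling

theorem chara1_general {V : Type*} [Fintype V] (E : V → V → Prop)
    (I : Set V) :
    Fills E I ↔ ({v : V | inSet E v = ∅} ⊆ I ∧ ∀ C : Set V, IsCycle E C → (C ∩ I).Nonempty) := by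
  constructor
  · rintro ⟨n, hn⟩
    refine ⟨fun v hv => mem_of_mem_dcl_of_inSet_eq_empty hv (hn ▸ mem_univ v), fun C hC => ?_⟩
    rw [← not_disjoint_iff_nonempty_inter]
    intro hCI
    have hdisj := disjoint_dcl_of_forall_exists_pred hC.exists_pred hCI n
    rw [hn, disjoint_univ] at hdisj
    exact hC.nonempty.ne_empty hdisj
  · rintro ⟨hsrc, hcyc⟩
    obtain ⟨N, hN⟩ := exists_dtm_dcl_subset (E := E) (I := I)
    refine ⟨N, eq_univ_of_forall fun v => by_contra fun hv => ?_⟩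
    obtain ⟨C, hC, hCsub⟩ := exists_isCycle_subset_of_forall_exists_pred ⟨v, hv⟩
      fun u hu => exists_pred_notMem_of_dtm_subset (hsrc.trans (subset_dcl N)) hN hu
    obtain ⟨u, huC, huI⟩ := hcyc C hC
    exact hCsub huC (subset_dcl N huI)

theorem chara1 {V : Type*} [Fintype V] (E : V → V → Prop)
    (hloopless : ∀ v, ¬ E v v) (I : Set V) :
    Fills E I ↔ ({v : V | inSet E v = ∅} ⊆ I ∧ ∀ C : Set V, IsCycle E C → (C ∩ I).Nonempty) :=
  chara1_general E I
end

section
/- Let G = (V,E) be the finite self-loopless directed graph on V = {0,1,2} with all possible edges between distinct vertices. Then no singleton subset of V is filling, and every minimal filling subset I contains a minimal cycle C with |I ∩ C| ≥ 2. Hence minimal filling sets need not intersect every minimal cycle in exactly one vertex. -/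
/-- A cycle containing no other cycle as a proper subset. -/
def MinCycle {V : Type*} (E : V → V → Prop) (C : Set V) : Prop :=
  IsCycle E C ∧ ∀ C' ⊆ C, IsCycle E C' → C' = C

/-- A filling set none of whose proper subsets is filling. -/
def MinFilling {V : Type*} (E : V → V → Prop) (I : Set V) : Prop :=
  Fills E I ∧ ∀ J ⊂ I, ¬ Fills E J

/-!
In the complete digraph on three vertices every vertex has two distinct in-neighbours, so a set
with at most one vertex determines nothing new and never fills. Hence a minimal filling set contains
two distinct vertices `a`, `b`, and the 2-cycle `a → b → a` is minimal, since the graph has no loops.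
-/

section Filling

variable {V : Type*} {E : V → V → Prop} {S : Set V}

theorem dcl_eq_self_of_Dtm_subset (h : Dtm E S ⊆ S) : ∀ n, dcl E S n = S
  | 0 => rfl
  | n + 1 => by rw [dcl, dcl_eq_self_of_Dtm_subset h n, Set.union_eq_left.mpr h]

theorem Dtm_eq_empty_of_subsingleton (hin : ∀ v, (inSet E v).Nontrivial) (hS : S.Subsingleton) :
    Dtm E S = ∅ :=
  Set.eq_empty_of_forall_notMem fun v ⟨_, hsub⟩ => (hin v).not_subsingleton (hS.anti hsub)

theorem not_fills_of_subsingleton [Nontrivial V] (hin : ∀ v, (inSet E v).Nontrivial)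
    (hS : S.Subsingleton) : ¬ Fills E S := by
  rintro ⟨n, hn⟩
  have hS_univ : S = Set.univ := by
    rw [← hn, dcl_eq_self_of_Dtm_subset (by simp [Dtm_eq_empty_of_subsingleton hin hS])]
  exact Set.not_subsingleton_iff.mpr Set.nontrivial_univ (hS_univ ▸ hS)

end Filling

section Cycles

variable {V : Type*} {E : V → V → Prop}

theorem IsCycle.nontrivial (hirr : ∀ v, ¬ E v v) {C : Set V} (hC : IsCycle E C) :
    C.Nontrivial := by
  obtain ⟨n, p, hn, -, hE, rfl⟩ := hC
  exact ⟨p 0, ⟨0, Nat.zero_le n, rfl⟩, p 1, ⟨1, hn, rfl⟩,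
    fun h => hirr (p 0) (h ▸ hE 0 hn)⟩

theorem isCycle_pair {a b : V} (hab : E a b) (hba : E b a) : IsCycle E {a, b} := by
  refine ⟨2, fun k => if k % 2 = 0 then a else b, by norm_num, by norm_num, ?_, ?_⟩
  · intro k hk
    interval_cases k <;> simpa
  · ext x
    simp only [Set.mem_image, Set.mem_ofPred_eq, Set.mem_insert_iff, Set.mem_singleton_iff]
    constructor
    · rintro (rfl | rfl)
      · exact ⟨0, by norm_num⟩
      · exact ⟨1, by norm_num⟩
    · rintro ⟨k, -, rfl⟩
      by_cases h : k % 2 = 0 <;> simp [h]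

theorem minCycle_pair (hirr : ∀ v, ¬ E v v) {a b : V} (hab : E a b) (hba : E b a) :
    MinCycle E {a, b} := by
  refine ⟨isCycle_pair hab hba, fun C' hC' hcyc => ?_⟩
  have hne : a ≠ b := fun h => hirr a (h ▸ hab)
  have : Finite C' := (Set.toFinite _).subset hC'
  have hcard : 1 < C'.ncard := Set.one_lt_ncard_iff_nontrivial.mpr (hcyc.nontrivial hirr)
  exact Set.eq_of_subset_of_ncard_le hC' (by rw [Set.ncard_pair hne]; omega)

end Cycles

theorem minimal_filling_cycle_two :
    let E : Fin 3 → Fin 3 → Prop := fun x y => x ≠ y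
    (∀ v : Fin 3, ¬ Fills E {v}) ∧
      ∀ I : Set (Fin 3), MinFilling E I →
        ∃ C : Set (Fin 3), MinCycle E C ∧ 2 ≤ (I ∩ C).ncard := by
  intro E
  have hin : ∀ v, (inSet E v).Nontrivial := fun v =>
    ⟨v + 1, by simp [inSet, E], v + 2, by simp [inSet, E], by revert v; decide⟩
  refine ⟨fun v => not_fills_of_subsingleton hin Set.subsingleton_singleton, fun I hI => ?_⟩
  obtain ⟨a, ha, b, hb, hab⟩ : I.Nontrivial :=
    Set.not_subsingleton_iff.mp fun hS => not_fills_of_subsingleton hin hS hI.1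
  refine ⟨{a, b}, minCycle_pair (fun v h => h rfl) hab hab.symm, ?_⟩
  rw [Set.inter_eq_self_of_subset_right (Set.pair_subset ha hb), Set.ncard_pair hab]
end

section
/- Let G = (V,E) be a finite self-loopless directed graph and I ⊆ V. Then I p-fills V if and only if I intersects every strongly connected component of G that has no incoming edges in the condensation G/≃. -/
/-- Vertices p-determined by `S`. -/
def pDtm {V : Type*} (E : V → V → Prop) (S : Set V) : Set V :=
  {v | (inSet E v ∩ S).Nonempty}

/-- Iterated p-determination closure. -/
def pdcl {V : Type*} (E : V → V → Prop) (I : Set V) : ℕ → Set V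
  | 0 => I
  | n + 1 => pdcl E I n ∪ pDtm E (pdcl E I n)

/-- `I` p-fills the vertex set. -/
def PFills {V : Type*} (E : V → V → Prop) (I : Set V) : Prop :=
  ∃ n, pdcl E I n = Set.univ

/-- `x` and `y` are strongly connected. -/
def SConn {V : Type*} (E : V → V → Prop) (x y : V) : Prop :=
  Relation.ReflTransGen E x y ∧ Relation.ReflTransGen E y x

/-- `C` is a strongly connected component, i.e. an equivalence class of `SConn`. -/
def IsSCC {V : Type*} (E : V → V → Prop) (C : Set V) : Prop :=
  ∃ x : V, C = {y | SConn E x y}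

/-- Edge relation of the condensation graph, on strongly connected components. -/
def sccEdge {V : Type*} (E : V → V → Prop) (C D : Set V) : Prop :=
  IsSCC E C ∧ IsSCC E D ∧ C ≠ D ∧ ∃ c ∈ C, ∃ d ∈ D, E c d

/-!
A vertex lies in some `pdcl E I n` exactly when it is reachable from `I`, so `I` p-fills `V`
iff every vertex is reachable from `I`. A component without incoming edges is closed under
predecessors, so it can only be reached from inside itself and must meet `I`. Conversely, by
finiteness every vertex has an ancestor `u` whose set of ancestors is minimal; any edge into the
component of `u` from outside would produce an ancestor with strictly fewer ancestors, so that
component has no incoming edges, and a vertex of `I` in it reaches the original vertex.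
-/

open Relation

section Reachability

variable {V : Type*} (E : V → V → Prop) (I : Set V)

lemma pdcl_mono : Monotone (pdcl E I) :=
  monotone_nat_of_le_succ fun _ => Set.subset_union_left

lemma exists_mem_pdcl_iff {v : V} :
    (∃ n, v ∈ pdcl E I n) ↔ ∃ u ∈ I, ReflTransGen E u v := by
  constructor
  · rintro ⟨n, hn⟩
    induction n generalizing v with
    | zero => exact ⟨v, hn, .refl⟩
    | succ n ih =>
      rcases hn with hv | ⟨w, hwv, hw⟩
      · exact ih hv
      · obtain ⟨u, hu, huw⟩ := ih hw
        exact ⟨u, hu, huw.tail hwv⟩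
  · rintro ⟨u, hu, huv⟩
    induction huv with
    | refl => exact ⟨0, hu⟩
    | tail _ hwv ih =>
      obtain ⟨n, hn⟩ := ih
      exact ⟨n + 1, Or.inr ⟨_, hwv, hn⟩⟩

lemma pFills_iff_forall_reachable [Finite V] :
    PFills E I ↔ ∀ v, ∃ u ∈ I, ReflTransGen E u v := by
  simp_rw [← exists_mem_pdcl_iff]
  constructor
  · rintro ⟨n, hn⟩ v
    exact ⟨n, hn ▸ Set.mem_univ v⟩
  · intro h
    choose n hn using h
    obtain ⟨N, hN⟩ := Finite.bddAbove_range n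
    exact ⟨N, Set.eq_univ_of_forall fun v => pdcl_mono E I (hN ⟨v, rfl⟩) (hn v)⟩

end Reachability

section Components

variable {V : Type*} {E : V → V → Prop}

lemma sConn_refl (x : V) : SConn E x x := ⟨.refl, .refl⟩

lemma mem_of_reflTransGen_of_no_incoming {C : Set V} (hC : ∀ x ∉ C, ∀ c ∈ C, ¬ E x c)
    {w c : V} (hc : c ∈ C) (hwc : ReflTransGen E w c) : w ∈ C := by
  induction hwc using ReflTransGen.head_induction_on with
  | refl => exact hc
  | head hwx _ ih => exact by_contra fun hw => hC _ hw _ ih hwx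

variable (E) in
lemma exists_ancestor_in_source_component [Finite V] (v : V) :
    ∃ u, ReflTransGen E u v ∧
      ∀ x ∉ {y | SConn E u y}, ∀ c ∈ {y | SConn E u y}, ¬ E x c := by
  let ancestors : V → Set V := fun w => {y | ReflTransGen E y w}
  obtain ⟨u, huv, hmin⟩ := (InvImage.wf ancestors wellFounded_lt).has_min
    {w | ReflTransGen E w v} ⟨v, .refl⟩
  refine ⟨u, huv, fun x hx c hc hxc => ?_⟩
  have hxu : ReflTransGen E x u := (ReflTransGen.single hxc).trans hc.2
  exact hmin x (hxu.trans huv) ⟨fun y hy => hy.trans hxu, fun hsub => hx ⟨hsub .refl, hxu⟩⟩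

end Components

theorem chara2_general {V : Type*} [Fintype V] (E : V → V → Prop)
    (I : Set V) :
    PFills E I ↔
      ∀ C : Set V, IsSCC E C → (∀ x ∉ C, ∀ c ∈ C, ¬ E x c) → (I ∩ C).Nonempty := by
  rw [pFills_iff_forall_reachable]
  constructor
  · rintro hreach C ⟨x, rfl⟩ hC
    obtain ⟨u, hu, hux⟩ := hreach x
    exact ⟨u, hu, mem_of_reflTransGen_of_no_incoming hC (sConn_refl x) hux⟩
  · intro hmeet v
    obtain ⟨u, huv, hC⟩ := exists_ancestor_in_source_component E v
    obtain ⟨i, hi, hiu⟩ := hmeet _ ⟨u, rfl⟩ hC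
    exact ⟨i, hi, hiu.2.trans huv⟩

theorem chara2 {V : Type*} [Fintype V] (E : V → V → Prop)
    (hloopless : ∀ v, ¬ E v v) (I : Set V) :
    PFills E I ↔
      ∀ C : Set V, IsSCC E C → (∀ x ∉ C, ∀ c ∈ C, ¬ E x c) → (I ∩ C).Nonempty :=
  chara2_general E I
end
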